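/- arXiv:1301.4359 — 2 statements merged into one kernel-verified Lean document; each statement's English description precedes it below -/
import Mathlib

section
/- For real b > 0 and μ > 0, the series ∑_{n=0}^∞ ((1/2)_n / n!) · 1/(b + nμ) equals π^{1/2} Γ(b/μ) / (μ Γ(b/μ + 1/2)). -/
/-!
The coefficients `(1/2)_n / n!` are those of the binomial series `(1 - x)^(-1/2)`, and
`1 / (n + c) = ∫₀¹ x^(n + c - 1) dx`. Since all terms are nonnegative, summation and integration
may be interchanged, so with `c = b / μ` the series equals `μ⁻¹ ∫₀¹ x^(c - 1) (1 - x)^(-1/2) dx`,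
which is the Beta integral `μ⁻¹ B(c, 1/2) = μ⁻¹ Γ(c) Γ(1/2) / Γ(c + 1/2)`, and `Γ(1/2) = √π`.
-/

open Real BigOperators

noncomputable def poch (a : ℝ) (n : ℕ) : ℝ := ∏ i ∈ Finset.range n, (a + i)

noncomputable def digamma (x : ℝ) : ℝ := deriv Real.Gamma x / Real.Gamma x

open MeasureTheory Set

lemma poch_eq_ascPochhammer_eval (a : ℝ) (n : ℕ) : poch a n = (ascPochhammer ℝ n).eval a := by
  induction n with
  | zero => simp [poch]
  | succ n ih => rw [poch, Finset.prod_range_succ, ← poch, ih, ascPochhammer_succ_eval]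

lemma poch_nonneg {a : ℝ} (ha : 0 ≤ a) (n : ℕ) : 0 ≤ poch a n :=
  Finset.prod_nonneg fun _ _ ↦ by positivity

lemma poch_div_factorial_eq_choose (a : ℝ) (n : ℕ) :
    poch a n / n.factorial = Ring.choose (a + n - 1) n := by
  rw [← Ring.multichoose_eq, eq_comm, eq_div_iff (by positivity), mul_comm, ← nsmul_eq_mul,
    Ring.factorial_nsmul_multichoose_eq_ascPochhammer, Polynomial.ascPochhammer_smeval_eq_eval,
    poch_eq_ascPochhammer_eval]

lemma hasSum_poch_div_factorial_mul_pow (a : ℝ) {x : ℝ} (hx : |x| < 1) :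
    HasSum (fun n ↦ poch a n / n.factorial * x ^ n) (1 / (1 - x) ^ a) := by
  have hx' : x ∈ Metric.eball (0 : ℝ) 1 := by
    rw [Metric.mem_eball, edist_zero_right, enorm_eq_nnnorm]
    exact_mod_cast (show ‖x‖ < 1 by rwa [Real.norm_eq_abs])
  simpa [FormalMultilinearSeries.ofScalars_apply_eq, poch_div_factorial_eq_choose, mul_comm]
    using (one_div_one_sub_rpow_hasFPowerSeriesOnBall_zero a).hasSum hx'

lemma ofReal_rpow_mul_one_sub_rpow {x : ℝ} (hx : x ∈ Icc 0 1) (α β : ℝ) :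
    ((x ^ (α - 1) * (1 - x) ^ (β - 1) : ℝ) : ℂ) =
      (x : ℂ) ^ ((α : ℂ) - 1) * (1 - (x : ℂ)) ^ ((β : ℂ) - 1) := by
  rw [Complex.ofReal_mul, Complex.ofReal_cpow hx.1, Complex.ofReal_cpow (sub_nonneg.2 hx.2)]
  push_cast
  rfl

lemma intervalIntegrable_rpow_mul_one_sub_rpow {α β : ℝ} (hα : 0 < α) (hβ : 0 < β) :
    IntervalIntegrable (fun x ↦ x ^ (α - 1) * (1 - x) ^ (β - 1)) volume 0 1 := by
  refine (Complex.betaIntegral_convergent (u := α) (v := β) (by simpa) (by simpa)).norm.congr ?_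
  intro x hx
  rw [uIoc_of_le zero_le_one] at hx
  have hx' : x ∈ Icc (0 : ℝ) 1 := Ioc_subset_Icc_self hx
  dsimp only
  rw [← ofReal_rpow_mul_one_sub_rpow hx', Complex.norm_real, Real.norm_of_nonneg]
  exact mul_nonneg (rpow_nonneg hx'.1 _) (rpow_nonneg (sub_nonneg.2 hx'.2) _)

lemma integral_rpow_mul_one_sub_rpow {α β : ℝ} (hα : 0 < α) (hβ : 0 < β) :
    ∫ x in (0 : ℝ)..1, x ^ (α - 1) * (1 - x) ^ (β - 1) = Gamma α * Gamma β / Gamma (α + β) := by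
  apply Complex.ofReal_injective
  rw [← intervalIntegral.integral_ofReal, intervalIntegral.integral_congr
    (g := fun x : ℝ ↦ (x : ℂ) ^ ((α : ℂ) - 1) * (1 - (x : ℂ)) ^ ((β : ℂ) - 1))
    (fun x hx ↦ ofReal_rpow_mul_one_sub_rpow (by rwa [uIcc_of_le zero_le_one] at hx) α β),
    ← Complex.betaIntegral, Complex.betaIntegral_eq_Gamma_mul_div _ _ (by simpa) (by simpa)]
  push_cast
  simp only [Complex.Gamma_ofReal, ← Complex.ofReal_add]

lemma integral_rpow_natCast_add {c : ℝ} (hc : 0 < c) (n : ℕ) :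
    ∫ x in (0 : ℝ)..1, x ^ ((n : ℝ) + c - 1) = 1 / (n + c) := by
  rw [integral_rpow (Or.inl (by linarith [n.cast_nonneg (α := ℝ)])), sub_add_cancel, one_rpow,
    zero_rpow (by positivity), sub_zero]

lemma hasSum_div_natCast_add_of_hasSum_mul_pow {a : ℕ → ℝ} {f : ℝ → ℝ} {c : ℝ} (hc : 0 < c)
    (ha : ∀ n, 0 ≤ a n) (hf : ∀ x ∈ Ioo (0 : ℝ) 1, HasSum (fun n ↦ a n * x ^ n) (f x))
    (hint : IntervalIntegrable (fun x ↦ x ^ (c - 1) * f x) volume 0 1) :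
    HasSum (fun n ↦ a n / (n + c)) (∫ x in (0 : ℝ)..1, x ^ (c - 1) * f x) := by
  have hterm : ∀ n : ℕ, IntervalIntegrable (fun x : ℝ ↦ a n * x ^ ((n : ℝ) + c - 1)) volume 0 1 :=
    fun n ↦ (intervalIntegral.intervalIntegrable_rpow'
      (by linarith [n.cast_nonneg (α := ℝ)])).const_mul _
  have hvalue : ∀ n : ℕ, ∫ x in (0 : ℝ)..1, a n * x ^ ((n : ℝ) + c - 1) = a n / (n + c) := by
    intro n
    rw [intervalIntegral.integral_const_mul, integral_rpow_natCast_add hc, mul_one_div]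
  have hsum : ∀ x ∈ Ioo (0 : ℝ) 1,
      HasSum (fun n : ℕ ↦ a n * x ^ ((n : ℝ) + c - 1)) (x ^ (c - 1) * f x) := by
    intro x hx
    have hterm_eq : ∀ n : ℕ, x ^ (c - 1) * (a n * x ^ n) = a n * x ^ ((n : ℝ) + c - 1) := by
      intro n
      rw [add_sub_assoc, rpow_add hx.1, rpow_natCast]
      ring
    simpa only [hterm_eq] using (hf x hx).mul_left (x ^ (c - 1))
  have hIoo : ∀ {g : ℝ → ℝ}, IntervalIntegrable g volume 0 1 → IntegrableOn g (Ioo 0 1) :=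
    fun h ↦ ((intervalIntegrable_iff_integrableOn_Ioc_of_le zero_le_one).1 h).mono_set
      Ioo_subset_Ioc_self
  simp_rw [← hvalue, intervalIntegral.integral_of_le zero_le_one, integral_Ioc_eq_integral_Ioo]
  -- as all terms are nonnegative, the series itself is a dominating function
  refine hasSum_integral_of_dominated_convergence (fun n x ↦ a n * x ^ ((n : ℝ) + c - 1))
    (fun n ↦ (hIoo (hterm n)).aestronglyMeasurable) (fun n ↦ ?_) ?_ ?_ ?_
  · refine ae_restrict_of_forall_mem measurableSet_Ioo fun x hx ↦ (Real.norm_of_nonneg ?_).le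
    exact mul_nonneg (ha n) (rpow_nonneg hx.1.le _)
  · exact ae_restrict_of_forall_mem measurableSet_Ioo fun x hx ↦ (hsum x hx).summable
  · exact (hIoo hint).congr_fun (fun x hx ↦ (hsum x hx).tsum_eq.symm) measurableSet_Ioo
  · exact ae_restrict_of_forall_mem measurableSet_Ioo hsum

lemma hasSum_poch_one_half_div_factorial_div_natCast_add {c : ℝ} (hc : 0 < c) :
    HasSum (fun n ↦ poch (1 / 2) n / n.factorial / (n + c))
      (√π * Gamma c / Gamma (c + 1 / 2)) := by
  have hintegrand : ∀ x ∈ uIcc (0 : ℝ) 1,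
      x ^ (c - 1) * (1 / (1 - x) ^ (1 / 2 : ℝ)) = x ^ (c - 1) * (1 - x) ^ (1 / 2 - 1 : ℝ) := by
    intro x hx
    rw [uIcc_of_le zero_le_one] at hx
    rw [show (1 / 2 - 1 : ℝ) = -(1 / 2) by norm_num, rpow_neg (sub_nonneg.2 hx.2), one_div]
  have hhalf : (0 : ℝ) < 1 / 2 := by norm_num
  have hint := intervalIntegrable_rpow_mul_one_sub_rpow hc hhalf
  have hsum := hasSum_div_natCast_add_of_hasSum_mul_pow hc
    (fun n ↦ div_nonneg (poch_nonneg hhalf.le n) (Nat.cast_nonneg _))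
    (fun x hx ↦ hasSum_poch_div_factorial_mul_pow (1 / 2) (abs_lt.2 ⟨by linarith [hx.1], hx.2⟩))
    (hint.congr fun x hx ↦ (hintegrand x (uIoc_subset_uIcc hx)).symm)
  rwa [intervalIntegral.integral_congr hintegrand, integral_rpow_mul_one_sub_rpow hc hhalf,
    Gamma_one_half_eq, mul_comm (Gamma c)] at hsum

theorem stmt3 (b μ : ℝ) (hb : 0 < b) (hμ : 0 < μ) :
    ∑' n : ℕ, (poch (1/2) n / n.factorial) * (1 / (b + n * μ)) =
      Real.sqrt π * Real.Gamma (b / μ) / (μ * Real.Gamma (b / μ + 1/2)) := by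
  have hterm : ∀ n : ℕ, poch (1 / 2) n / n.factorial * (1 / (b + n * μ)) =
      μ⁻¹ * (poch (1 / 2) n / n.factorial / (n + b / μ)) := by
    intro n
    field_simp
    ring
  rw [tsum_congr hterm, ((hasSum_poch_one_half_div_factorial_div_natCast_add
    (div_pos hb hμ)).mul_left μ⁻¹).tsum_eq]
  field_simp
end

section
/- The series ∑_{n=0}^∞ ((1/2)_n / n!)^2 · 1/((n+1)(n+2)) equals 16/(9π). -/
/-!
Write `c n = ((1/2)_n / n!)^2`. Since `c (n+1) = c n * ((2n+1)/(2n+2))^2`, the number `(2n+1) c n`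
is the reciprocal of the `n`-th Wallis product `W n`, which tends to `π/2`. The series telescopes:
its `N`-th partial sum is `c N * 4N(4N+5) / (9(N+1))`, that is `W N⁻¹` times a rational function
of `N` tending to `8/9`. Hence the sum is `(8/9) / (π/2) = 16/(9π)`.
-/

open Real BigOperators

open Filter Topology Finset Real.Wallis

lemma poch_succ (a : ℝ) (n : ℕ) : poch a (n + 1) = poch a n * (a + n) :=
  prod_range_succ _ _

noncomputable def pochHalfRatioSq (n : ℕ) : ℝ := (poch (1 / 2) n / n.factorial) ^ 2

lemma pochHalfRatioSq_zero : pochHalfRatioSq 0 = 1 := by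
  simp [pochHalfRatioSq, poch]

lemma pochHalfRatioSq_succ (n : ℕ) :
    pochHalfRatioSq (n + 1) = pochHalfRatioSq n * ((2 * n + 1) / (2 * n + 2)) ^ 2 := by
  simp only [pochHalfRatioSq, poch_succ, Nat.factorial_succ, Nat.cast_mul, Nat.cast_succ]
  field_simp
  ring

lemma pochHalfRatioSq_mul_eq_inv_W (n : ℕ) : pochHalfRatioSq n * (2 * n + 1) = (W n)⁻¹ := by
  induction n with
  | zero => simp [pochHalfRatioSq_zero, W]
  | succ n ih =>
    rw [pochHalfRatioSq_succ, W_succ, mul_inv, ← ih]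
    push_cast
    field_simp
    ring

lemma sum_range_pochHalfRatioSq (N : ℕ) :
    ∑ n ∈ range N, pochHalfRatioSq n * (1 / (((n : ℝ) + 1) * ((n : ℝ) + 2))) =
      pochHalfRatioSq N * (4 * N * (4 * N + 5)) / (9 * (N + 1)) := by
  induction N with
  | zero => simp
  | succ N ih =>
    rw [sum_range_succ, ih, pochHalfRatioSq_succ]
    push_cast
    field_simp
    ring

lemma tendsto_rational_eight_ninths :
    Tendsto (fun N : ℕ => 4 * (N : ℝ) * (4 * N + 5) / (9 * (N + 1) * (2 * N + 1)))
      atTop (𝓝 (8 / 9)) := by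
  have hfactor : ∀ N : ℕ, 4 * (N : ℝ) * (4 * N + 5) / (9 * (N + 1) * (2 * N + 1)) =
      8 / 9 * (N / (N + 1 / 2)) * (1 + 1 / 4 * (1 / (N + 1))) := by
    intro N
    field_simp
    ring
  have hlim := ((tendsto_natCast_div_add_atTop (1 / 2 : ℝ)).const_mul (8 / 9)).mul
    ((tendsto_one_div_add_atTop_nhds_zero_nat.const_mul (1 / 4 : ℝ)).const_add 1)
  simp only [mul_one, mul_zero, add_zero] at hlim
  simpa only [hfactor] using hlim

theorem stmt9 :
    ∑' n : ℕ, (poch (1/2) n / n.factorial) ^ 2 * (1 / (((n : ℝ) + 1) * ((n : ℝ) + 2))) =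
      16 / (9 * π) := by
  have hnonneg (n : ℕ) : 0 ≤ pochHalfRatioSq n * (1 / (((n : ℝ) + 1) * ((n : ℝ) + 2))) := by
    unfold pochHalfRatioSq
    positivity
  have hpartial (N : ℕ) :
      ∑ n ∈ range N, pochHalfRatioSq n * (1 / (((n : ℝ) + 1) * ((n : ℝ) + 2))) =
        (W N)⁻¹ * (4 * (N : ℝ) * (4 * N + 5) / (9 * (N + 1) * (2 * N + 1))) := by
    rw [sum_range_pochHalfRatioSq, ← pochHalfRatioSq_mul_eq_inv_W]
    field_simp
  have hlim : Tendsto (fun N : ℕ => (W N)⁻¹ * (4 * (N : ℝ) * (4 * N + 5) /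
      (9 * (N + 1) * (2 * N + 1)))) atTop (𝓝 (16 / (9 * π))) := by
    convert (tendsto_W_nhds_pi_div_two.inv₀ (by positivity)).mul tendsto_rational_eight_ninths
      using 2
    field_simp
    ring
  refine ((hasSum_iff_tendsto_nat_of_nonneg hnonneg _).mpr ?_).tsum_eq
  simpa only [hpartial] using hlim
end
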